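/- arXiv:math/0106207 — 3 statements merged into one kernel-verified Lean document; each statement's English description precedes it below -/
import Mathlib

section
/- For a partition (Young diagram) λ, define P_λ(s) = Σ_{cells (i,j) ∈ λ} s^{2(j-i)} as a Laurent polynomial in s over ℤ. If λ and μ are partitions with P_λ = P_μ, then λ = μ. -/
/-!
The coefficient of `s^(2d)` in `P_λ` is the number of cells of `λ` on the diagonal of content `d`.
Along such a diagonal the cells of a Young diagram form an initial segment, indexed by
`min i j`, so `(i, j) ∈ λ` exactly when `min i j` is smaller than that number.
-/

/-- The content polynomial `P_λ(s) = Σ_{cells (i,j) ∈ λ} s^(2(j-i))` as a Laurent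
polynomial over ℤ (cells are 0-indexed, content of cell `(i,j)` is `j - i`). -/
noncomputable def contentPoly (γ : YoungDiagram) : LaurentPolynomial ℤ :=
  ∑ c ∈ γ.cells, LaurentPolynomial.T (2 * ((c.2 : ℤ) - (c.1 : ℤ)))

open Finset

namespace YoungDiagram

def diag (γ : YoungDiagram) (d : ℤ) : Finset (ℕ × ℕ) :=
  γ.cells.filter fun c => (c.2 : ℤ) - c.1 = d

lemma coeff_two_mul_contentPoly (γ : YoungDiagram) (d : ℤ) :
    (contentPoly γ).coeff (2 * d) = #(γ.diag d) := by
  simp only [contentPoly, AddMonoidAlgebra.coeff_sum, sum_apply',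
    LaurentPolynomial.T_apply, diag, card_filter, Nat.cast_sum, Nat.cast_ite, Nat.cast_one,
    Nat.cast_zero]
  refine sum_congr rfl fun c _ => if_congr ?_ rfl rfl
  omega

lemma injOn_min_of_sub_eq (d : ℤ) :
    Set.InjOn (fun c : ℕ × ℕ => min c.1 c.2) {c | (c.2 : ℤ) - c.1 = d} := by
  intro a ha b hb hab
  simp only [Set.mem_ofPred_eq] at ha hb hab
  ext <;> omega

lemma min_lt_card_diag_of_mem {γ : YoungDiagram} {i j : ℕ} (h : (i, j) ∈ γ) :
    min i j < #(γ.diag (j - i)) := by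
  have hle : #(range (min i j + 1)) ≤ #(γ.diag (j - i)) := by
    refine card_le_card_of_injOn (fun t => (i - t, j - t)) (fun t ht => ?_)
      (fun s hs t ht hst => ?_)
    · simp only [coe_range, Set.mem_Iio] at ht
      simp only [diag, coe_filter, mem_cells, Set.mem_ofPred_eq]
      exact ⟨γ.up_left_mem (Nat.sub_le _ _) (Nat.sub_le _ _) h, by omega⟩
    · simp only [coe_range, Set.mem_Iio, Prod.mk.injEq] at hs ht hst
      omega
  simpa using hle

lemma mem_of_min_lt_card_diag {γ : YoungDiagram} {i j : ℕ}
    (h : min i j < #(γ.diag (j - i))) : (i, j) ∈ γ := by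
  have hlt : #(range (min i j)) < #((γ.diag (j - i)).image fun c => min c.1 c.2) := by
    rwa [card_range, card_image_of_injOn]
    exact (injOn_min_of_sub_eq _).mono fun c hc => (mem_filter.1 hc).2
  obtain ⟨_, hm, hmin⟩ := exists_mem_notMem_of_card_lt_card hlt
  obtain ⟨c, hc, rfl⟩ := mem_image.1 hm
  obtain ⟨hcell, hcd⟩ := mem_filter.1 hc
  simp only [mem_range, not_lt] at hmin
  exact γ.up_left_mem (i1 := i) (j1 := j) (by omega) (by omega) hcell

lemma mem_iff_min_lt_card_diag (γ : YoungDiagram) (i j : ℕ) :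
    (i, j) ∈ γ ↔ min i j < #(γ.diag (j - i)) :=
  ⟨min_lt_card_diag_of_mem, mem_of_min_lt_card_diag⟩

end YoungDiagram

theorem contentPoly_injective (γ μ : YoungDiagram)
    (h : contentPoly γ = contentPoly μ) : γ = μ := by
  have hdiag (d : ℤ) : #(γ.diag d) = #(μ.diag d) := by
    have := congrArg (fun p : LaurentPolynomial ℤ => p.coeff (2 * d)) h
    simp only [YoungDiagram.coeff_two_mul_contentPoly] at this
    exact_mod_cast this
  ext ⟨i, j⟩
  simp only [YoungDiagram.mem_cells, YoungDiagram.mem_iff_min_lt_card_diag, hdiag]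
end

section
/- Define t_λ = (s - s⁻¹)·v⁻¹·(Σ_{cells (i,j)∈λ} s^{2(j-i)}) + δ in the two-variable Laurent polynomial field ℚ(s,v) (with δ = (v⁻¹ - v)/(s - s⁻¹)). Then the map λ ↦ t_λ is injective on partitions: if t_λ = t_μ as rational functions, then λ = μ. -/
noncomputable section

abbrev F : Type := FractionRing (MvPolynomial (Fin 2) ℚ)

def s : F := algebraMap (MvPolynomial (Fin 2) ℚ) F (MvPolynomial.X 0)
def v : F := algebraMap (MvPolynomial (Fin 2) ℚ) F (MvPolynomial.X 1)

def δ : F := (v⁻¹ - v) / (s - s⁻¹)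

/-- `t_λ = (s - s⁻¹) v⁻¹ (Σ_{(i,j)∈λ} s^{2(j-i)}) + δ`. -/
def t (γ : YoungDiagram) : F :=
  (s - s⁻¹) * v⁻¹ * (∑ c ∈ γ.cells, s ^ (2 * ((c.2 : ℤ) - (c.1 : ℤ)))) + δ

/-!
Since `s` and `v` are transcendental over `ℚ`, the factor `(s - s⁻¹) v⁻¹` is nonzero, so `t λ`
determines `∑_{c ∈ λ} (s²)^{content c}`. This is the value at the transcendental unit `s²` of the
Laurent polynomial `∑_{c ∈ λ} T^{content c}`, whose coefficients therefore are determined too: they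
count the cells of `λ` on each diagonal. The cells of a diagonal form an initial segment of it, so
`(i, j) ∈ λ` iff `min i j` is less than the number of cells of content `j - i`.
-/

open Finset LaurentPolynomial

theorem Transcendental.ne_zero {R A : Type*} [CommRing R] [Nontrivial R] [Ring A] [Algebra R A]
    {x : A} (hx : Transcendental R x) : x ≠ 0 :=
  fun h => hx (h ▸ isAlgebraic_zero)

theorem Transcendental.sub_inv_ne_zero {R K : Type*} [CommRing R] [Nontrivial R] [Field K]
    [Algebra R K] {x : K} (hx : Transcendental R x) : x - x⁻¹ ≠ 0 := by
  intro h
  have hsq : x ^ 2 = 1 := by rw [sq, ← mul_inv_cancel₀ hx.ne_zero, ← sub_eq_zero.1 h]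
  exact hx.pow two_pos (hsq ▸ isAlgebraic_one)

theorem LaurentPolynomial.eval₂_injective_of_transcendental {R S : Type*} [CommRing R]
    [CommRing S] [Algebra R S] {x : Sˣ} (hx : Transcendental R (x : S)) :
    Function.Injective (eval₂ (algebraMap R S) x) := by
  refine (injective_iff_map_eq_zero _).2 fun f hf => ?_
  obtain ⟨n, p, hp⟩ := exists_T_pow f
  have hp0 : Polynomial.aeval (x : S) p = 0 := by
    rw [Polynomial.aeval_def, ← eval₂_toLaurent, hp, map_mul, hf, zero_mul]
  rw [transcendental_iff_injective.1 hx (hp0.trans (map_zero _).symm), map_zero] at hp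
  exact (isUnit_T (n : ℤ)).mul_left_eq_zero.1 hp.symm

namespace YoungDiagram

def content (c : ℕ × ℕ) : ℤ := (c.2 : ℤ) - (c.1 : ℤ)

def diagonal (γ : YoungDiagram) (k : ℤ) : Finset (ℕ × ℕ) := {c ∈ γ.cells | content c = k}

theorem min_lt_card_diagonal_of_mem {γ : YoungDiagram} {i j : ℕ} (h : (i, j) ∈ γ) :
    min i j < #(γ.diagonal (j - i)) := by
  have hcard := card_le_card_of_injOn (s := range (min i j + 1)) (t := γ.diagonal (j - i))
    (fun d => (i - d, j - d)) (fun d hd => ?_) (fun a ha b hb hab => ?_)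
  · simpa using hcard
  · rw [coe_range, Set.mem_Iio] at hd
    rw [diagonal, mem_coe, mem_filter, mem_cells, content]
    exact ⟨γ.up_left_mem (Nat.sub_le _ _) (Nat.sub_le _ _) h, by dsimp only; omega⟩
  · rw [coe_range, Set.mem_Iio] at ha hb
    rw [Prod.mk.injEq] at hab
    omega

theorem card_diagonal_le_min_of_notMem {γ : YoungDiagram} {i j : ℕ} (h : (i, j) ∉ γ) :
    #(γ.diagonal (j - i)) ≤ min i j := by
  have hcard := card_le_card_of_injOn (s := γ.diagonal (j - i)) (t := range (min i j))
    (fun c => min c.1 c.2) (fun c hc => ?_) (fun a ha b hb hab => ?_)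
  · simpa using hcard
  · rw [diagonal, mem_coe, mem_filter, mem_cells, content] at hc
    rw [coe_range, Set.mem_Iio]
    by_contra! hle
    exact h (γ.up_left_mem (by omega) (by omega) hc.1)
  · rw [diagonal, mem_coe, mem_filter, content] at ha hb
    dsimp only at hab
    ext <;> omega

theorem mem_iff_min_lt_card_diagonal (γ : YoungDiagram) (i j : ℕ) :
    (i, j) ∈ γ ↔ min i j < #(γ.diagonal (j - i)) :=
  ⟨min_lt_card_diagonal_of_mem, fun hlt =>
    by_contra fun h => (card_diagonal_le_min_of_notMem h).not_gt hlt⟩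

theorem ext_of_card_diagonal {γ₁ γ₂ : YoungDiagram}
    (h : ∀ k, #(γ₁.diagonal k) = #(γ₂.diagonal k)) : γ₁ = γ₂ := by
  ext ⟨i, j⟩
  rw [mem_cells, mem_cells, mem_iff_min_lt_card_diagonal, mem_iff_min_lt_card_diagonal, h]

noncomputable def contentPolynomial (R : Type*) [Semiring R] (γ : YoungDiagram) : R[T;T⁻¹] :=
  ∑ c ∈ γ.cells, T (content c)

theorem coeff_contentPolynomial (R : Type*) [Semiring R] (γ : YoungDiagram) (k : ℤ) :
    (contentPolynomial R γ).coeff k = #(γ.diagonal k) := by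
  rw [contentPolynomial, AddMonoidAlgebra.coeff_sum, Finset.sum_apply']
  simp only [T, AddMonoidAlgebra.coeff_single, Finsupp.single_apply]
  rw [Finset.sum_boole, diagonal]

theorem contentPolynomial_injective (R : Type*) [Semiring R] [CharZero R] :
    Function.Injective (contentPolynomial R) := fun γ₁ γ₂ h =>
  ext_of_card_diagonal fun k => by
    exact_mod_cast (coeff_contentPolynomial R γ₁ k).symm.trans
      ((congrArg (·.coeff k) h).trans (coeff_contentPolynomial R γ₂ k))

theorem eval₂_contentPolynomial {R S : Type*} [CommSemiring R] [CommSemiring S] (f : R →+* S)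
    (u : Sˣ) (γ : YoungDiagram) :
    eval₂ f u (contentPolynomial R γ) = ∑ c ∈ γ.cells, ((u ^ content c : Sˣ) : S) := by
  simp only [contentPolynomial, map_sum, eval₂_T]

end YoungDiagram

open YoungDiagram

theorem transcendental_s : Transcendental ℚ s :=
  (transcendental_algebraMap_iff (IsFractionRing.injective _ _)).2
    (MvPolynomial.transcendental_X ℚ 0)

theorem transcendental_v : Transcendental ℚ v :=
  (transcendental_algebraMap_iff (IsFractionRing.injective _ _)).2
    (MvPolynomial.transcendental_X ℚ 1)

def sSqUnit : Fˣ := Units.mk0 (s ^ 2) (pow_ne_zero 2 transcendental_s.ne_zero)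

theorem t_eq_eval₂_contentPolynomial (γ : YoungDiagram) :
    t γ = (s - s⁻¹) * v⁻¹ * eval₂ (algebraMap ℚ F) sSqUnit (contentPolynomial ℚ γ) + δ := by
  simp only [t, eval₂_contentPolynomial, sSqUnit, Units.val_zpow_eq_zpow_val, Units.val_mk0,
    content, zpow_mul, zpow_ofNat]

theorem t_injective : Function.Injective t := by
  intro γ₁ γ₂ h
  rw [t_eq_eval₂_contentPolynomial, t_eq_eval₂_contentPolynomial] at h
  have hfactor : (s - s⁻¹) * v⁻¹ ≠ 0 :=
    mul_ne_zero transcendental_s.sub_inv_ne_zero (inv_ne_zero transcendental_v.ne_zero)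
  exact contentPolynomial_injective ℚ <|
    eval₂_injective_of_transcendental (transcendental_s.pow two_pos) <|
      mul_left_cancel₀ hfactor (add_right_cancel h)
end
end

section
/- Let a_i(λ) denote the number of cells of the Young diagram λ with content equal to i (for i ∈ ℤ). Then the function λ ↦ (a_i(λ))_{i∈ℤ} is injective: a partition is uniquely determined by its multiset of cell contents. -/
/-!
Along the diagonal of content `d`, the cell `(i, j)` sits at position `min i j`, and since a
Young diagram is a lower set the cells of `γ` on that diagonal occupy exactly the positions
`0, 1, …, a_d(γ) - 1`. Hence `(i, j) ∈ γ ↔ min i j < a_{j - i}(γ)`, so the content counts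
determine the cells.
-/

open scoped Classical in
/-- `a_i(λ)` = number of cells of the Young diagram `λ` with content `i`
(the content of cell `(i,j)` is `j - i`). -/
noncomputable def contentCount (γ : YoungDiagram) (i : ℤ) : ℕ :=
  (γ.cells.filter (fun c => (c.2 : ℤ) - (c.1 : ℤ) = i)).card

theorem Finset.eq_range_card_of_isLowerSet {s : Finset ℕ} (hs : IsLowerSet (s : Set ℕ)) :
    s = Finset.range s.card := by
  rcases hs.eq_univ_or_Iio with huniv | ⟨a, ha⟩
  · exact absurd (huniv ▸ s.finite_toSet) Set.infinite_univ
  · have hsa : s = Finset.range a := Finset.coe_injective (by rw [ha, Finset.coe_range])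
    rw [hsa, Finset.card_range]

theorem Prod.eq_of_sub_eq_of_min_eq {c c' : ℕ × ℕ} (hsub : (c.2 : ℤ) - c.1 = c'.2 - c'.1)
    (hmin : min c.1 c.2 = min c'.1 c'.2) : c = c' := by
  ext <;> omega

namespace YoungDiagram

def diagonalPositions (γ : YoungDiagram) (d : ℤ) : Finset ℕ :=
  (γ.cells.filter fun c => (c.2 : ℤ) - c.1 = d).image fun c => min c.1 c.2

variable (γ : YoungDiagram)

theorem card_diagonalPositions (d : ℤ) : (γ.diagonalPositions d).card = contentCount γ d := by
  rw [diagonalPositions, Finset.card_image_of_injOn, contentCount]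
  intro c hc c' hc' hmin
  simp only [Finset.coe_filter, Set.mem_ofPred_eq] at hc hc'
  exact Prod.eq_of_sub_eq_of_min_eq (hc.2.trans hc'.2.symm) hmin

theorem min_mem_diagonalPositions_iff (i j : ℕ) :
    min i j ∈ γ.diagonalPositions ((j : ℤ) - i) ↔ (i, j) ∈ γ := by
  simp only [diagonalPositions, Finset.mem_image, Finset.mem_filter, mem_cells]
  constructor
  · rintro ⟨c, ⟨hc, hsub⟩, hmin⟩
    rwa [← Prod.eq_of_sub_eq_of_min_eq (c' := (i, j)) hsub hmin]
  · exact fun hij => ⟨(i, j), ⟨hij, rfl⟩, rfl⟩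

theorem isLowerSet_diagonalPositions (d : ℤ) :
    IsLowerSet (γ.diagonalPositions d : Set ℕ) := by
  intro k m hkm hm
  simp only [diagonalPositions, Finset.coe_image, Finset.coe_filter, Set.mem_image,
    Set.mem_ofPred_eq, mem_cells] at hm ⊢
  obtain ⟨c, ⟨hc, hsub⟩, rfl⟩ := hm
  refine ⟨(c.1 - (min c.1 c.2 - m), c.2 - (min c.1 c.2 - m)),
    ⟨γ.up_left_mem (Nat.sub_le _ _) (Nat.sub_le _ _) hc, ?_⟩, ?_⟩ <;> grind

theorem mem_iff_min_lt_contentCount (i j : ℕ) :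
    (i, j) ∈ γ ↔ min i j < contentCount γ ((j : ℤ) - i) := by
  rw [← min_mem_diagonalPositions_iff, ← card_diagonalPositions,
    ← Finset.mem_range, ← Finset.eq_range_card_of_isLowerSet (γ.isLowerSet_diagonalPositions _)]

end YoungDiagram

theorem contentCount_injective (γ μ : YoungDiagram)
    (h : ∀ i : ℤ, contentCount γ i = contentCount μ i) : γ = μ := by
  ext ⟨i, j⟩
  rw [YoungDiagram.mem_cells, YoungDiagram.mem_cells, YoungDiagram.mem_iff_min_lt_contentCount,
    YoungDiagram.mem_iff_min_lt_contentCount, h]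
end
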